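/- Let p be a function analytic on the open unit disk 𝔻 = {z ∈ ℂ : |z| < 1} with p(0) = 1. If |z·p'(z) + p(z) + p(z)² − 2| < 5/2 for all z ∈ 𝔻, then Re p(z) > 0 for all z ∈ 𝔻. -/

import Mathlib

open Complex Metric Set

/-!
Suppose `Re p` vanishes somewhere in the disk and let `z₁` be such a zero of least modulus, so
that `p z₁ = i t` and `Re p > 0` on `|z| < |z₁|`. The Cayley transform `w = (1 - p) / (1 + p)`
then maps `|z| < |z₁|` into the closed unit disk with `w 0 = 0` and `|w z₁| = 1`, and Jack's
lemma gives `z₁ w'(z₁) = m w(z₁)` with `m ≥ 1`, i.e. `2 z₁ p'(z₁) = -m (1 + t²)`. Hence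
`Re (z₁ p'(z₁) + p(z₁) + p(z₁)² - 2) = -m (1 + t²) / 2 - t² - 2 ≤ -5/2`.

Jack's lemma itself: by the Schwarz lemma `r² |w|² - |z|²` is `≤ 0` on `|z| < r = |z₁|` and
vanishes at `z₁`, so its derivative at `z₁` is nonpositive in every direction pointing into
the disk, which forces `z₁ w'(z₁) / w(z₁)` to be real and at least `1`.
-/

theorem exists_norm_le_eq_zero_of_nonpos {E : Type*} [NormedAddCommGroup E] [NormedSpace ℝ E]
    {f : E → ℝ} {z : E} (hf : ContinuousOn f (closedBall 0 ‖z‖)) (hf0 : 0 ≤ f 0)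
    (hfz : f z ≤ 0) : ∃ y ∈ closedBall (0 : E) ‖z‖, f y = 0 :=
  (convex_closedBall (0 : E) ‖z‖).isPreconnected.intermediate_value
    (by simp) (by simp) hf ⟨hfz, hf0⟩

theorem exists_eq_zero_forall_mem_ball_pos {E : Type*} [NormedAddCommGroup E]
    [NormedSpace ℝ E] [ProperSpace E] {f : E → ℝ} {z₀ : E}
    (hf : ContinuousOn f (closedBall 0 ‖z₀‖)) (hf0 : 0 ≤ f 0) (hfz₀ : f z₀ ≤ 0) :
    ∃ z₁ ∈ closedBall (0 : E) ‖z₀‖, f z₁ = 0 ∧ ∀ z ∈ ball (0 : E) ‖z₁‖, 0 < f z := by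
  set Z := closedBall (0 : E) ‖z₀‖ ∩ f ⁻¹' {0}
  have hZ : IsCompact Z := (isCompact_closedBall _ _).of_isClosed_subset
    (hf.preimage_isClosed_of_isClosed isClosed_closedBall isClosed_singleton) inter_subset_left
  obtain ⟨z₁, ⟨hz₁, hfz₁⟩, hmin⟩ :=
    hZ.exists_isMinOn (exists_norm_le_eq_zero_of_nonpos hf hf0 hfz₀) continuous_norm.continuousOn
  refine ⟨z₁, hz₁, hfz₁, fun z hz => lt_of_not_ge fun hfz => ?_⟩
  have hz_lt : ‖z‖ < ‖z₁‖ := mem_ball_zero_iff.1 hz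
  have hsub : closedBall (0 : E) ‖z‖ ⊆ closedBall 0 ‖z₀‖ :=
    closedBall_subset_closedBall (hz_lt.le.trans (mem_closedBall_zero_iff.1 hz₁))
  obtain ⟨y, hy, hfy⟩ := exists_norm_le_eq_zero_of_nonpos (hf.mono hsub) hf0 hfz
  have : ‖z₁‖ ≤ ‖y‖ := hmin ⟨hsub hy, hfy⟩
  linarith [mem_closedBall_zero_iff.1 hy]

theorem Complex.exists_nonneg_eq_ofReal_of_re_mul_nonpos {d : ℂ}
    (h : ∀ k : ℂ, ‖1 + k‖ < 1 → (d * k).re ≤ 0) : ∃ m : ℝ, 0 ≤ m ∧ d = m := by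
  refine ⟨d.re, ?_, ?_⟩
  · have := h (-1 / 2) (by norm_num)
    simp only [mul_re, div_ofNat_re, neg_re, one_re, div_ofNat_im, neg_im, one_im, neg_zero,
      zero_div, mul_zero, sub_zero] at this
    linarith
  · by_contra hd
    have him : d.im ≠ 0 := fun h0 => hd (Complex.ext (by simp) (by simp [h0]))
    set t := (d.re + 1) / d.im
    set δ := 1 / (1 + t ^ 2)
    have hδ : 0 < δ := by positivity
    -- `k = -δ (1 + t i)` lies in the disk `|1 + k| < 1` and has `Re (d k) = δ > 0`.
    have hk := h (-δ * (1 + t * I)) ?_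
    · have : (d * (-δ * (1 + t * I))).re = δ := by
        simp only [neg_mul, mul_neg, neg_re, mul_re, ofReal_re, add_re, one_re, I_re, mul_zero,
          ofReal_im, add_im, one_im, I_im, mul_one, sub_self, add_zero, mul_im, zero_add, t]
        field_simp
        ring
      linarith
    · rw [← sq_lt_one_iff₀ (norm_nonneg _), Complex.sq_norm, Complex.normSq_apply]
      have : δ * (1 + t^2) = 1 := by simp only [δ]; field_simp
      simp only [neg_mul, add_re, one_re, neg_re, mul_re, ofReal_re, I_re, mul_zero, ofReal_im,
        I_im, mul_one, sub_self, add_zero, add_im, one_im, mul_im, zero_add, neg_im]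
      nlinarith

theorem jack_lemma {w : ℂ → ℂ} {r : ℝ} {z₁ W : ℂ} (hd : DifferentiableOn ℂ w (ball 0 r))
    (hmaps : MapsTo w (ball 0 r) (closedBall 0 1)) (hw0 : w 0 = 0) (hz₁ : ‖z₁‖ = r)
    (hwz₁ : ‖w z₁‖ = 1) (hW : HasDerivAt w W z₁) :
    ∃ m : ℝ, 1 ≤ m ∧ z₁ * W = m * w z₁ := by
  have hr : 0 < r := by
    rw [← hz₁, norm_pos_iff]
    rintro rfl
    simp [hw0] at hwz₁
  set F : ℂ → ℝ := fun z => r ^ 2 * ‖w z‖ ^ 2 - ‖z‖ ^ 2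
  have hF_nonpos : ∀ z ∈ ball (0 : ℂ) r, F z ≤ 0 := by
    intro z hz
    have h := Complex.dist_le_div_mul_dist_of_mapsTo_ball hd (by rwa [hw0]) hz
    simp only [hw0, dist_zero_right] at h
    rw [one_div, le_inv_mul_iff₀ hr] at h
    have := pow_le_pow_left₀ (by positivity) h 2
    simp only [F]
    linarith [mul_pow r ‖w z‖ 2]
  have hFz₁ : F z₁ = 0 := by simp [F, hz₁, hwz₁]
  have hmax : IsLocalMaxOn F (ball 0 r) z₁ :=
    eventually_nhdsWithin_of_forall fun z hz => hFz₁ ▸ hF_nonpos z hz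
  have hF := (((hW.hasFDerivAt.restrictScalars ℝ).norm_sq).const_mul (r ^ 2)).sub
    ((hasFDerivAt_id (𝕜 := ℝ) z₁).norm_sq)
  set c := z₁ * W * (starRingEnd ℂ) (w z₁) with hc_def
  have hcone : ∀ k : ℂ, ‖1 + k‖ < 1 → ((c - 1) * k).re ≤ 0 := by
    intro k hk
    have hy : z₁ * (1 + k) ∈ ball (0 : ℂ) r := by
      rw [mem_ball_zero_iff, norm_mul, hz₁]
      exact mul_lt_of_lt_one_right hr hk
    have hseg : openSegment ℝ z₁ (z₁ * (1 + k)) ⊆ ball 0 r := by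
      rw [← isOpen_ball.interior_eq]
      refine (convex_ball (0 : ℂ) r).openSegment_closure_interior_subset_interior ?_ ?_
      · rw [closure_ball _ hr.ne', mem_closedBall_zero_iff, hz₁]
      · rwa [isOpen_ball.interior_eq]
    have := hmax.hasFDerivWithinAt_nonpos hF.hasFDerivWithinAt
      (sub_mem_posTangentConeAt_of_openSegment_subset hseg)
    have hr2 : r ^ 2 = z₁.re ^ 2 + z₁.im ^ 2 := by
      rw [← hz₁, Complex.sq_norm, Complex.normSq_apply]; ring
    -- the derivative of `F` at `z₁` in the direction `z₁ k` is `2 r² Re ((c - 1) k)`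
    have key : r ^ 2 * ((c - 1) * k).re ≤ 0 := by
      simp only [id_eq, ContinuousLinearMap.comp_id, sub_apply, smul_apply,
        ContinuousLinearMap.comp_apply, ContinuousLinearMap.coe_restrictScalars',
        ContinuousLinearMap.toSpanSingleton_apply, smul_eq_mul, coe_innerSL_apply, Complex.inner,
        mul_re, sub_re, add_re, one_re, add_im, one_im, sub_im, mul_im, conj_re, conj_im,
        nsmul_eq_mul, Nat.cast_ofNat, hc_def] at this ⊢
      rw [hr2] at this ⊢
      linarith
    exact nonpos_of_mul_nonpos_right key (by positivity)
  obtain ⟨m, hm, hcm⟩ := Complex.exists_nonneg_eq_ofReal_of_re_mul_nonpos hcone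
  have hconj : (starRingEnd ℂ) (w z₁) * w z₁ = 1 := by simp [Complex.conj_mul', hwz₁]
  refine ⟨m + 1, by linarith, ?_⟩
  calc z₁ * W = c * w z₁ := by rw [hc_def, mul_assoc _ _ (w z₁), hconj, mul_one]
    _ = (m + 1 : ℝ) * w z₁ := by rw [eq_add_of_sub_eq hcm]; push_cast; ring

theorem Complex.norm_one_sub_le_norm_one_add {ζ : ℂ} (h : 0 ≤ ζ.re) : ‖1 - ζ‖ ≤ ‖1 + ζ‖ := by
  rw [← sq_le_sq₀ (norm_nonneg _) (norm_nonneg _), Complex.sq_norm, Complex.sq_norm,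
    Complex.normSq_apply, Complex.normSq_apply]
  simp only [sub_re, one_re, sub_im, one_im, zero_sub, mul_neg, neg_mul, neg_neg, add_re, add_im,
    zero_add, add_le_add_iff_right]
  nlinarith

theorem Complex.norm_one_sub_eq_norm_one_add {ζ : ℂ} (h : ζ.re = 0) : ‖1 - ζ‖ = ‖1 + ζ‖ := by
  rw [← sq_eq_sq₀ (norm_nonneg _) (norm_nonneg _), Complex.sq_norm, Complex.sq_norm,
    Complex.normSq_apply, Complex.normSq_apply]
  simp [h]

theorem Complex.one_add_ne_zero_of_re_nonneg {ζ : ℂ} (h : 0 ≤ ζ.re) : 1 + ζ ≠ 0 := by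
  intro h0
  have := congrArg Complex.re h0
  rw [add_re, one_re, zero_re] at this
  linarith

theorem jack_lemma_of_re_nonneg {p : ℂ → ℂ} {z₁ p' : ℂ}
    (hp : DifferentiableOn ℂ p (ball 0 ‖z₁‖)) (hp0 : p 0 = 1)
    (hnonneg : ∀ z ∈ ball (0 : ℂ) ‖z₁‖, 0 ≤ (p z).re) (hre : (p z₁).re = 0)
    (hp' : HasDerivAt p p' z₁) :
    ∃ m : ℝ, 1 ≤ m ∧ 2 * (z₁ * p') = -m * (1 - p z₁ ^ 2) := by
  have hne : 1 + p z₁ ≠ 0 := Complex.one_add_ne_zero_of_re_nonneg hre.ge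
  set w : ℂ → ℂ := fun z => (1 - p z) / (1 + p z) with hw_def
  have hdiff : DifferentiableOn ℂ w (ball 0 ‖z₁‖) := fun z hz =>
    ((differentiableWithinAt_const 1).sub (hp z hz)).div
      ((differentiableWithinAt_const 1).add (hp z hz))
      (Complex.one_add_ne_zero_of_re_nonneg (hnonneg z hz))
  have hmaps : MapsTo w (ball 0 ‖z₁‖) (closedBall 0 1) := fun z hz => by
    rw [mem_closedBall_zero_iff, hw_def, norm_div]
    exact div_le_one_of_le₀ (Complex.norm_one_sub_le_norm_one_add (hnonneg z hz)) (norm_nonneg _)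
  have hwz₁ : ‖w z₁‖ = 1 := by
    rw [hw_def, norm_div, Complex.norm_one_sub_eq_norm_one_add hre,
      div_self (norm_ne_zero_iff.2 hne)]
  have hw' : HasDerivAt w (-2 * p' / (1 + p z₁) ^ 2) z₁ := by
    refine ((hp'.const_sub 1).div (hp'.const_add 1) hne).congr_deriv ?_
    field_simp
    ring
  obtain ⟨m, hm, h⟩ := jack_lemma hdiff hmaps (by simp [w, hp0]) rfl hwz₁ hw'
  refine ⟨m, hm, ?_⟩
  rw [hw_def] at h
  field_simp at h
  linear_combination -h

theorem five_halves_le_norm {ζ q : ℂ} {m : ℝ} (hm : 1 ≤ m) (hζ : ζ.re = 0)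
    (hq : 2 * q = -m * (1 - ζ ^ 2)) : 5 / 2 ≤ ‖q + ζ + ζ ^ 2 - 2‖ := by
  have hq_re : 2 * q.re = -m * (1 + ζ.im ^ 2) := by
    have := congrArg Complex.re hq
    simp only [mul_re, re_ofNat, im_ofNat, zero_mul, sub_zero, pow_two, neg_mul, neg_re, ofReal_re,
      sub_re, one_re, hζ, mul_zero, zero_sub, sub_neg_eq_add, ofReal_im, sub_im, one_im, mul_im,
      add_zero, sub_self] at this
    linear_combination this
  have hre : (q + ζ + ζ ^ 2 - 2).re = q.re - ζ.im ^ 2 - 2 := by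
    simp only [pow_two, sub_re, add_re, hζ, add_zero, mul_re, mul_zero, zero_sub, re_ofNat]
    ring
  calc (5 : ℝ) / 2 ≤ |(q + ζ + ζ ^ 2 - 2).re| := by
        rw [hre, abs_of_nonpos (by nlinarith [sq_nonneg ζ.im])]
        nlinarith [sq_nonneg ζ.im]
    _ ≤ ‖q + ζ + ζ ^ 2 - 2‖ := Complex.abs_re_le_norm _

theorem stmt_0 (p : ℂ → ℂ)
    (hp : AnalyticOnNhd ℂ p (ball (0 : ℂ) 1))
    (hp0 : p 0 = 1)
    (hineq : ∀ z ∈ ball (0 : ℂ) 1,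
      ‖z * deriv p z + p z + (p z) ^ 2 - 2‖ < 5 / 2) :
    ∀ z ∈ ball (0 : ℂ) 1, 0 < (p z).re := by
  by_contra! h
  obtain ⟨z₀, hz₀, hre₀⟩ := h
  have hsub : closedBall (0 : ℂ) ‖z₀‖ ⊆ ball 0 1 :=
    closedBall_subset_ball (mem_ball_zero_iff.1 hz₀)
  obtain ⟨z₁, hz₁, hre, hpos⟩ := exists_eq_zero_forall_mem_ball_pos
    (continuous_re.comp_continuousOn (hp.continuousOn.mono hsub)) (by simp [hp0]) hre₀
  have hz₁_mem : z₁ ∈ ball (0 : ℂ) 1 := hsub hz₁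
  obtain ⟨m, hm, hjack⟩ := jack_lemma_of_re_nonneg
    (hp.differentiableOn.mono (ball_subset_ball (mem_ball_zero_iff.1 hz₁_mem).le)) hp0
    (fun z hz => (hpos z hz).le) hre (hp z₁ hz₁_mem).differentiableAt.hasDerivAt
  linarith [hineq z₁ hz₁_mem, five_halves_le_norm hm hre hjack]
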